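/- Let t_0 = 0, t_k = ∑_{j=1}^k 1/(j+1), and define ψ_e : [0,∞) → ℕ by ψ_e(t) = k+2 for t ∈ [t_k, t_{k+1}). Then for each fixed t ≥ 0, sup_{s ∈ [0,t]} | ψ_e(t_n - s)/n - exp(-s) | → 0 as n → ∞. -/

import Mathlib

open Real Filter

/-- `t_k = ∑_{j=1}^k 1/(j+1)`. -/
noncomputable def tseq (k : ℕ) : ℝ := ∑ j ∈ Finset.range k, (1 : ℝ) / (j + 2)

/-- `ψ_e(t) = k + 2` for `t ∈ [t_k, t_{k+1})`. -/
noncomputable def psiE (t : ℝ) : ℕ := sSup {k : ℕ | tseq k ≤ t} + 2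

lemma tseq_zero : tseq 0 = 0 := by simp [tseq]

lemma tseq_succ (k : ℕ) : tseq (k + 1) = tseq k + 1 / ((k : ℝ) + 2) := by
  simp [tseq, Finset.sum_range_succ]

lemma tseq_strictMono : StrictMono tseq := by
  apply strictMono_nat_of_lt_succ
  intro n
  rw [tseq_succ]
  have : (0:ℝ) < 1 / ((n:ℝ) + 2) := by positivity
  linarith

lemma tseq_mono : Monotone tseq := tseq_strictMono.monotone

lemma log_step_le (x : ℝ) (hx : 0 < x) : Real.log (x + 1) - Real.log x ≤ 1 / x := by
  have h := Real.log_le_sub_one_of_pos (show (0:ℝ) < (x+1)/x by positivity)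
  rw [Real.log_div (by linarith) (ne_of_gt hx)] at h
  have : (x + 1) / x - 1 = 1 / x := by field_simp; ring
  linarith [this ▸ h]

lemma le_log_step (x : ℝ) (hx : 0 < x) : 1 / (x + 1) ≤ Real.log (x + 1) - Real.log x := by
  have h := Real.log_le_sub_one_of_pos (show (0:ℝ) < x/(x+1) by positivity)
  rw [Real.log_div (ne_of_gt hx) (by linarith)] at h
  have : x / (x + 1) - 1 = -(1 / (x+1)) := by field_simp; ring
  linarith [this ▸ h]

/-- upper bound: `t_n - t_k ≤ log(n+1) - log(k+1)` for `k ≤ n`. -/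
lemma tseq_sub_le {k n : ℕ} (h : k ≤ n) :
    tseq n - tseq k ≤ Real.log ((n:ℝ) + 1) - Real.log ((k:ℝ) + 1) := by
  induction n, h using Nat.le_induction with
  | base => simp
  | succ n hn ih =>
    rw [tseq_succ]
    have h1 := le_log_step ((n:ℝ) + 1) (by positivity)
    push_cast
    have h2 : ((n:ℝ) + 1) + 1 = (n:ℝ) + 2 := by ring
    rw [h2] at h1 ⊢
    linarith

/-- lower bound: `log(n+2) - log(k+2) ≤ t_n - t_k` for `k ≤ n`. -/
lemma le_tseq_sub {k n : ℕ} (h : k ≤ n) :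
    Real.log ((n:ℝ) + 2) - Real.log ((k:ℝ) + 2) ≤ tseq n - tseq k := by
  induction n, h using Nat.le_induction with
  | base => simp
  | succ n hn ih =>
    rw [tseq_succ]
    have h1 := log_step_le ((n:ℝ) + 2) (by positivity)
    push_cast
    have h2 : ((n:ℝ) + 2) + 1 = (n:ℝ) + 3 := by ring
    have h3 : ((n:ℝ) + 1) + 2 = (n:ℝ) + 3 := by ring
    rw [h2] at h1
    rw [h3]
    linarith

lemma tseq_tendsto : Tendsto tseq atTop atTop := by
  have h := tendsto_sum_range_one_div_nat_succ_atTop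
  have h2 : Tendsto (fun n : ℕ => ∑ i ∈ Finset.range (n+1), (1:ℝ) / (i + 1)) atTop atTop :=
    h.comp (tendsto_add_atTop_nat 1)
  have h3 : Tendsto (fun n : ℕ => (∑ i ∈ Finset.range (n+1), (1:ℝ) / (i + 1)) - 1)
      atTop atTop := tendsto_atTop_add_const_right _ (-1) h2
  have heq : ∀ n : ℕ, tseq n = (∑ i ∈ Finset.range (n+1), (1:ℝ) / (i + 1)) - 1 := by
    intro n
    rw [Finset.sum_range_succ']
    simp [tseq]
    apply Finset.sum_congr rfl
    intro j _
    push_cast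
    ring_nf
  exact h3.congr (fun n => (heq n).symm)

lemma bddAbove_set (x : ℝ) : BddAbove {k : ℕ | tseq k ≤ x} := by
  obtain ⟨m, hm⟩ := (tseq_tendsto.eventually_gt_atTop x).exists
  refine ⟨m, fun k hk => ?_⟩
  by_contra h
  push_neg at h
  have := tseq_mono h.le
  exact absurd hk (by simp only [Set.mem_setOf_eq]; linarith)

/-- key pointwise bound -/
lemma key_bound (n : ℕ) (hn : 1 ≤ n) (s : ℝ) (hs0 : 0 ≤ s) (hsn : s ≤ tseq n) :
    |(psiE (tseq n - s) : ℝ) / n - Real.exp (-s)| ≤ 2 / n := by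
  set x := tseq n - s with hx
  have hx0 : 0 ≤ x := by linarith
  set S := {k : ℕ | tseq k ≤ x} with hS
  have hne : S.Nonempty := ⟨0, by simp [hS, tseq_zero, hx0]⟩
  have hbdd : BddAbove S := bddAbove_set x
  set K := sSup S with hK
  have hK1 : tseq K ≤ x := Nat.sSup_mem hne hbdd
  have hK2 : x < tseq (K + 1) := by
    by_contra h
    push_neg at h
    have : K + 1 ≤ K := le_csSup hbdd h
    omega
  have hKn : K ≤ n := by
    by_contra h
    push_neg at h
    have := tseq_strictMono h
    linarith
  have hpsi : psiE x = K + 2 := rfl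
  have hnR : (0:ℝ) < n := by exact_mod_cast hn
  have hes : Real.exp (-s) ≤ 1 := Real.exp_le_one_iff.mpr (by linarith)
  have hes0 : 0 < Real.exp (-s) := Real.exp_pos _
  -- upper: K + 1 ≤ (n+1) * exp(-s)
  have hup : (K:ℝ) + 1 ≤ ((n:ℝ) + 1) * Real.exp (-s) := by
    have h1 : s ≤ tseq n - tseq K := by linarith
    have h2 := tseq_sub_le hKn
    have h3 : s ≤ Real.log ((n:ℝ)+1) - Real.log ((K:ℝ)+1) := by linarith
    have h4 : Real.exp s ≤ ((n:ℝ)+1) / ((K:ℝ)+1) := by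
      calc Real.exp s ≤ Real.exp (Real.log ((n:ℝ)+1) - Real.log ((K:ℝ)+1)) :=
            Real.exp_le_exp.mpr h3
        _ = ((n:ℝ)+1) / ((K:ℝ)+1) := by
            rw [Real.exp_sub, Real.exp_log (by positivity), Real.exp_log (by positivity)]
    have h5 : ((K:ℝ)+1) * Real.exp s ≤ (n:ℝ)+1 := by
      rw [div_eq_mul_inv] at h4
      have hKpos : (0:ℝ) < (K:ℝ)+1 := by positivity
      calc ((K:ℝ)+1) * Real.exp s ≤ ((K:ℝ)+1) * (((n:ℝ)+1) * ((K:ℝ)+1)⁻¹) := by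
            exact mul_le_mul_of_nonneg_left h4 hKpos.le
        _ = (n:ℝ)+1 := by field_simp
    have := mul_le_mul_of_nonneg_right h5 hes0.le
    rw [mul_assoc, ← Real.exp_add] at this
    simpa using this
  -- lower: (n+2) * exp(-s) < K + 3
  have hlow : ((n:ℝ) + 2) * Real.exp (-s) < (K:ℝ) + 3 := by
    rcases eq_or_lt_of_le hKn with heq | hlt
    · rw [← heq]
      calc ((K:ℝ)+2) * Real.exp (-s) ≤ ((K:ℝ)+2) * 1 := by
            exact mul_le_mul_of_nonneg_left hes (by positivity)
        _ < (K:ℝ)+3 := by linarith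
    · have hK1n : K + 1 ≤ n := hlt
      have h2 := le_tseq_sub hK1n
      have h1 : tseq n - tseq (K+1) < s := by linarith
      have h3 : Real.log ((n:ℝ)+2) - Real.log (((K:ℝ)+1)+2) < s := by
        push_cast at h2; linarith
      have h4 : ((n:ℝ)+2) / ((K:ℝ)+3) < Real.exp s := by
        have := Real.exp_lt_exp.mpr h3
        rw [Real.exp_sub, Real.exp_log (by positivity), Real.exp_log (by positivity)] at this
        convert this using 2
        ring
      have h5 : ((n:ℝ)+2) < ((K:ℝ)+3) * Real.exp s := by
        rw [div_lt_iff₀ (by positivity)] at h4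
        linarith [h4]
      have := mul_lt_mul_of_pos_right h5 hes0
      rw [mul_assoc, ← Real.exp_add] at this
      simpa using this
  rw [hpsi, abs_le]
  push_cast
  have hrw : ((K:ℝ)+2)/n - Real.exp (-s) = (((K:ℝ)+2) - Real.exp (-s)*n)/n := by
    field_simp
  rw [hrw]
  constructor
  · rw [show -(2/(n:ℝ)) = (-2)/n by ring]
    apply div_le_div_of_nonneg_right ?_ hnR.le |>.trans_eq rfl
    case _ => linarith
  · apply (div_le_div_of_nonneg_right ?_ hnR.le).trans_eq rfl
    case _ => linarith

/-- For each fixed `t ≥ 0`,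
`sup_{s ∈ [0,t]} | ψ_e(t_n - s)/n - exp (-s) | → 0` as `n → ∞`. -/
theorem psiE_sup_tendsto (t : ℝ) (ht : 0 ≤ t) :
    Tendsto
      (fun n : ℕ => ⨆ s : Set.Icc (0 : ℝ) t, |(psiE (tseq n - s) : ℝ) / n - Real.exp (-s.1)|)
      atTop (nhds 0) := by
  have hne : Nonempty (Set.Icc (0:ℝ) t) := Set.nonempty_Icc.mpr ht |>.to_subtype
  apply squeeze_zero' (g := fun n : ℕ => 2 / (n:ℝ))
  · filter_upwards with n
    exact iSup_nonneg (fun s => abs_nonneg _)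
  · have h1 : ∀ᶠ n : ℕ in atTop, t ≤ tseq n := tseq_tendsto.eventually_ge_atTop t
    have h2 : ∀ᶠ n : ℕ in atTop, 1 ≤ n := eventually_ge_atTop 1
    filter_upwards [h1, h2] with n hn1 hn2
    apply ciSup_le
    rintro ⟨s, hs0, hst⟩
    exact key_bound n hn2 s hs0 (le_trans hst hn1)
  · exact tendsto_const_div_atTop_nhds_zero_nat 2
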